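/- arXiv:1204.2834 — 3 statements merged into one kernel-verified Lean document; each statement's English description precedes it below -/
import Mathlib

section
/- Suppose L : Finset B → ℂ* satisfies L(S) = L(X) · L(Y) whenever S is the disjoint union of X and Y and there are no interactions between X and Y (multiplicativity over disjoint unions). Then the cluster correlation factors satisfy tilde-L(S) = 1 for every subset S that is a disjoint union of two nonempty non-interacting parts, provided tilde-L(C) is defined for all proper subsets and tilde-L(∅) = 1. -/
/-!
Since `Lt S = L S / ∏_{C ⊊ S} Lt C`, the recursion says `L S = ∏_{C ⊆ S} Lt C`. Argue by strong
induction on `S = X ∪ Y`: a proper subset `C` meeting both `X` and `Y` splits into the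
non-interacting parts `C ∩ X`, `C ∩ Y`, so `Lt C = 1`. Hence the proper subsets of `S` contribute
only through subsets of `X` or of `Y` (which share only `∅`, with `Lt ∅ = 1`), giving
`∏_{C ⊊ S} Lt C = L X * L Y = L S`, and so `Lt S = 1`.
-/

namespace Finset

variable {α M : Type*} [DecidableEq α]

theorem prod_powerset_eq_mul_prod_ssubsets [CommMonoid M] (f : Finset α → M) (s : Finset α) :
    ∏ t ∈ s.powerset, f t = f s * ∏ t ∈ s.ssubsets, f t :=
  (mul_prod_erase _ f (mem_powerset_self s)).symm

theorem ssubset_union_of_subset_left {s t u : Finset α} (hst : s ⊆ t) (htu : Disjoint t u)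
    (hu : u.Nonempty) : s ⊂ t ∪ u :=
  hst.trans_ssubset <| left_lt_sup.2 fun hut => hu.ne_empty (htu.symm.eq_bot_of_le hut)

theorem inter_nonempty_of_subset_union_of_not_subset {s t u : Finset α} (hs : s ⊆ t ∪ u)
    (hsu : ¬s ⊆ u) : (s ∩ t).Nonempty := by
  obtain ⟨a, has, hau⟩ := not_subset.1 hsu
  exact ⟨a, mem_inter.2 ⟨has, (mem_union.1 (hs has)).resolve_right hau⟩⟩

theorem powerset_inter_powerset_of_disjoint {s t : Finset α} (hst : Disjoint s t) :
    s.powerset ∩ t.powerset = {∅} := by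
  ext u
  simp only [mem_inter, mem_powerset, mem_singleton]
  constructor
  · rintro ⟨hus, hut⟩
    exact (disjoint_self_iff_empty u).1 (hst.mono hus hut)
  · rintro rfl
    exact ⟨empty_subset s, empty_subset t⟩

theorem prod_ssubsets_union_of_disjoint [CommMonoid M] {f : Finset α → M} {s t : Finset α}
    (hst : Disjoint s t) (hs : s.Nonempty) (ht : t.Nonempty) (hf_empty : f ∅ = 1)
    (hf_mixed : ∀ u ⊂ s ∪ t, ¬u ⊆ s → ¬u ⊆ t → f u = 1) :
    ∏ u ∈ (s ∪ t).ssubsets, f u = (∏ u ∈ s.powerset, f u) * ∏ u ∈ t.powerset, f u := by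
  have hsub : s.powerset ∪ t.powerset ⊆ (s ∪ t).ssubsets := by
    intro u hu
    rw [mem_ssubsets]
    rcases mem_union.1 hu with hus | hut
    · exact ssubset_union_of_subset_left (mem_powerset.1 hus) hst ht
    · rw [union_comm]
      exact ssubset_union_of_subset_left (mem_powerset.1 hut) hst.symm hs
  have hunion : ∏ u ∈ s.powerset ∪ t.powerset, f u = ∏ u ∈ (s ∪ t).ssubsets, f u :=
    prod_subset hsub fun u hu hu' => by
      simp only [mem_union, mem_powerset, not_or] at hu'
      exact hf_mixed u (mem_ssubsets.1 hu) hu'.1 hu'.2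
  rw [← hunion, ← prod_union_inter, powerset_inter_powerset_of_disjoint hst, prod_singleton,
    hf_empty, mul_one]

end Finset

open Finset

theorem eq_prod_powerset_of_eq_div_prod_ssubsets {α M : Type*} [DecidableEq α]
    [CommGroupWithZero M] {L Lt : Finset α → M} (hne : ∀ s, Lt s ≠ 0)
    (hrec : ∀ s, Lt s = L s / ∏ t ∈ s.ssubsets, Lt t) (s : Finset α) :
    L s = ∏ t ∈ s.powerset, Lt t := by
  rw [prod_powerset_eq_mul_prod_ssubsets, hrec s,
    div_mul_cancel₀ _ (prod_ne_zero_iff.2 fun t _ => hne t)]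

/-- If `L` is multiplicative over disjoint non-interacting unions (factorable under
disconnected interactions), then every cluster correlation factor `Lt S` equals `1`
whenever `S` is a disjoint union of two nonempty non-interacting parts. -/
theorem cce_factor_one_of_disconnected {B : Type*} [DecidableEq B]
    (b : B → B → ℂ) (L Lt : Finset B → ℂ)
    (hne : ∀ S, Lt S ≠ 0)
    (hfact : ∀ X Y : Finset B, Disjoint X Y →
      (∀ i ∈ X, ∀ j ∈ Y, b i j = 0) → L (X ∪ Y) = L X * L Y)
    (hrec : ∀ S, Lt S = L S / ∏ C ∈ S.ssubsets, Lt C)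
    (hempty : Lt ∅ = 1) :
    ∀ (S X Y : Finset B), S = X ∪ Y → Disjoint X Y → X.Nonempty → Y.Nonempty →
      (∀ i ∈ X, ∀ j ∈ Y, b i j = 0) → Lt S = 1 := by
  have hL := eq_prod_powerset_of_eq_div_prod_ssubsets hne hrec
  intro S
  induction S using Finset.strongInduction with
  | _ S ih =>
    rintro X Y rfl hXY hX hY hb
    have hmixed : ∀ C ⊂ X ∪ Y, ¬C ⊆ X → ¬C ⊆ Y → Lt C = 1 := fun C hC hCX hCY =>
      ih C hC (C ∩ X) (C ∩ Y) (by rw [← inter_union_distrib_left, inter_eq_left.2 hC.subset])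
        (hXY.mono inter_subset_right inter_subset_right)
        (inter_nonempty_of_subset_union_of_not_subset hC.subset hCY)
        (inter_nonempty_of_subset_union_of_not_subset (union_comm X Y ▸ hC.subset) hCX)
        fun i hi j hj => hb i (mem_inter.1 hi).2 j (mem_inter.1 hj).2
    have hLS : L (X ∪ Y) ≠ 0 := by
      rw [hL]
      exact prod_ne_zero_iff.2 fun C _ => hne C
    rw [hrec, prod_ssubsets_union_of_disjoint hXY hX hY hempty hmixed, ← hL, ← hL,
      ← hfact X Y hXY hb, div_self hLS]
end

section
/- Let L assign to each finite subset S of B a formal power series in commuting variables b_{ij} (for unordered pairs {i,j} ⊆ B) with constant term 1, and suppose L is factorable under disconnected interactions: if S = X ⊔ Y and we set b_{ij} = 0 for all i ∈ X, j ∈ Y, then L(S) specializes to L(X)·L(Y). Define tilde-L(S) = L(S)/∏_{C ⊊ S} tilde-L(C). Then every non-constant monomial appearing in tilde-L(S) contains variables b_{ij} whose pairs {i,j}, viewed as edges on the vertex set S, form a graph in which every vertex of S lies in the same connected component, i.e., the monomial's edge set connects S fully. -/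
/-!
Setting the cross variables `b_{ij}` (`i ∈ X`, `j ∈ Y`) to zero is a ring endomorphism, so it can
be applied factor by factor to `L (X ∪ Y) = ∏_{C ⊆ X ∪ Y} Lt C`. The factors with `C ⊆ X` or
`C ⊆ Y` reassemble `L X * L Y`, which involves no cross variable, while by factorability the cut
of `L (X ∪ Y)` is `L X * L Y`; so the cut mixed factors multiply to `1`. By induction, the
monomials of a proper mixed `Lt C` connect `C`, hence contain a cross variable, so the cut of
`Lt C` is a constant, and then so is the cut of `Lt S`. A nonzero monomial of `Lt S` that does not
connect `S` avoids all cross variables of some splitting `S = X ⊔ Y`, so it survives the cut.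
-/

namespace MvPowerSeries

variable {σ R : Type*} [CommSemiring R]

open Classical in
noncomputable def restrictVarsFun (E : Set σ) (f : MvPowerSeries σ R) : MvPowerSeries σ R :=
  fun d => if ↑d.support ⊆ E then coeff d f else 0

open Classical in
theorem coeff_restrictVarsFun (E : Set σ) (f : MvPowerSeries σ R) (d : σ →₀ ℕ) :
    coeff d (restrictVarsFun E f) = if ↑d.support ⊆ E then coeff d f else 0 := rfl

/-- The substitution `X i ↦ 0` for all `i ∉ E`. -/
noncomputable def restrictVars (E : Set σ) : MvPowerSeries σ R →+* MvPowerSeries σ R where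
  toFun := restrictVarsFun E
  map_one' := by
    classical
    ext d
    rw [coeff_restrictVarsFun, coeff_one]
    split_ifs <;> simp_all
  map_mul' f g := by
    classical
    ext d
    simp only [coeff_restrictVarsFun, coeff_mul, ite_zero_mul_ite_zero]
    rw [Finset.ite_sum_zero]
    refine Finset.sum_congr rfl fun pq hpq => ?_
    simp only [← Finset.HasAntidiagonal.mem_antidiagonal.mp hpq, Finsupp.support_add_eq_union,
      Finset.coe_union, Set.union_subset_iff]
  map_zero' := by ext; simp [coeff_restrictVarsFun]
  map_add' f g := by ext; simp only [coeff_restrictVarsFun, map_add]; split_ifs <;> simp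

open Classical in
theorem coeff_restrictVars (E : Set σ) (f : MvPowerSeries σ R) (d : σ →₀ ℕ) :
    coeff d (restrictVars E f) = if ↑d.support ⊆ E then coeff d f else 0 :=
  coeff_restrictVarsFun E f d

theorem restrictVars_eq_self_iff {E : Set σ} {f : MvPowerSeries σ R} :
    restrictVars E f = f ↔ ∀ d, coeff d f ≠ 0 → ↑d.support ⊆ E := by
  refine ⟨fun h d hd => ?_, fun h => ext fun d => ?_⟩
  · by_contra hE
    rw [← h, coeff_restrictVars, if_neg hE] at hd
    exact hd rfl
  · rw [coeff_restrictVars]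
    split_ifs with hE
    · rfl
    · exact (not_imp_comm.mp (h d) hE).symm

theorem restrictVars_eq_self_of_subset {E F : Set σ} (hEF : E ⊆ F) {f : MvPowerSeries σ R}
    (hf : restrictVars E f = f) : restrictVars F f = f :=
  restrictVars_eq_self_iff.mpr fun d hd => (restrictVars_eq_self_iff.mp hf d hd).trans hEF

theorem restrictVars_congr {E : Set σ} {f g : MvPowerSeries σ R}
    (h : ∀ d, ↑d.support ⊆ E → coeff d f = coeff d g) : restrictVars E f = restrictVars E g := by
  ext d
  rw [coeff_restrictVars, coeff_restrictVars]
  split_ifs with hE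
  exacts [h d hE, rfl]

theorem restrictVars_eq_C {E : Set σ} {f : MvPowerSeries σ R}
    (h : ∀ d ≠ 0, ↑d.support ⊆ E → coeff d f = 0) : restrictVars E f = C (constantCoeff f) := by
  classical
  ext d
  rw [coeff_restrictVars, coeff_C]
  split_ifs with hE hd hd
  · rw [hd, coeff_zero_eq_constantCoeff_apply]
  · exact h d hd hE
  · simp [hd] at hE
  · rfl

theorem coeff_eq_zero_of_mul_C_eq_one {f : MvPowerSeries σ R} {c : R} (h : f * C c = 1)
    {d : σ →₀ ℕ} (hd : d ≠ 0) : coeff d f = 0 := by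
  classical
  have hc : IsUnit c := by simpa using (IsUnit.of_mul_eq_one_right _ h).map constantCoeff
  have hcoeff := congrArg (coeff d) h
  rw [coeff_mul_C, coeff_one, if_neg hd] at hcoeff
  exact hc.mul_left_eq_zero.mp hcoeff

end MvPowerSeries

namespace SimpleGraph

variable {V : Type*} {G : SimpleGraph V}

theorem Connected.exists_adj_inter_diff {C X : Set V} (hC : (G.induce C).Connected)
    {a b : V} (ha : a ∈ C ∩ X) (hb : b ∈ C \ X) : ∃ i ∈ C ∩ X, ∃ j ∈ C \ X, G.Adj i j := by
  obtain ⟨p⟩ := hC.preconnected ⟨a, ha.1⟩ ⟨b, hb.1⟩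
  obtain ⟨e, -, he₁, he₂⟩ := p.exists_boundary_dart (Subtype.val ⁻¹' X) ha.2 hb.2
  exact ⟨e.fst, ⟨e.fst.2, he₁⟩, e.snd, ⟨e.snd.2, he₂⟩, e.adj⟩

theorem exists_partition_of_not_connected_induce [DecidableEq V] {S : Finset V}
    (hS : S.Nonempty) (h : ¬ (G.induce ↑S).Connected) :
    ∃ X Y : Finset V, Disjoint X Y ∧ X ∪ Y = S ∧ X.Nonempty ∧ Y.Nonempty ∧
      ∀ i ∈ X, ∀ j ∈ Y, ¬ G.Adj i j := by
  have : Nonempty (S : Set V) := hS.coe_sort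
  obtain ⟨u, v, huv⟩ : ∃ u v : (S : Set V), ¬ (G.induce (S : Set V)).Reachable u v := by
    simpa [connected_iff, Preconnected, this] using h
  classical
  let X := S.filter fun a => ∃ h : a ∈ S, (G.induce ↑S).Reachable u ⟨a, h⟩
  refine ⟨X, S \ X, Finset.disjoint_sdiff, Finset.union_sdiff_of_subset (Finset.filter_subset _ _),
    ⟨u, Finset.mem_filter.mpr ⟨u.2, u.2, .rfl⟩⟩, ⟨v, ?_⟩, ?_⟩
  · simp only [X, Finset.mem_sdiff, Finset.mem_filter, not_and, not_exists]
    exact ⟨v.2, fun _ _ => huv⟩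
  · intro i hi j hj hij
    simp only [X, Finset.mem_sdiff, Finset.mem_filter, not_and, not_exists] at hi hj
    obtain ⟨-, hiS, hui⟩ := hi
    exact hj.2 hj.1 hj.1 (hui.trans (Adj.reachable (by simpa using hij)))

end SimpleGraph

theorem Finset.prod_powerset_union_of_disjoint {α M : Type*} [DecidableEq α] [CommMonoid M]
    {f : Finset α → M} (hf : f ∅ = 1) {X Y : Finset α} (h : Disjoint X Y) :
    ∏ C ∈ (X ∪ Y).powerset, f C =
      (∏ C ∈ X.powerset, f C) * (∏ C ∈ Y.powerset, f C) *
        ∏ C ∈ (X ∪ Y).powerset with ¬ C ⊆ X ∧ ¬ C ⊆ Y, f C := by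
  have hpure : {C ∈ (X ∪ Y).powerset | C ⊆ X ∨ C ⊆ Y} = X.powerset ∪ Y.powerset := by
    ext C
    simp only [mem_filter, mem_powerset, mem_union]
    constructor
    · exact fun h => h.2
    · rintro (hC | hC)
      exacts [⟨hC.trans subset_union_left, .inl hC⟩, ⟨hC.trans subset_union_right, .inr hC⟩]
  have hboth : X.powerset ∩ Y.powerset = {∅} := by
    ext C
    simp [← subset_inter_iff, disjoint_iff_inter_eq_empty.mp h]
  have hunion : ∏ C ∈ X.powerset ∪ Y.powerset, f C =
      (∏ C ∈ X.powerset, f C) * ∏ C ∈ Y.powerset, f C := by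
    rw [← prod_union_inter, hboth, prod_singleton, hf, mul_one]
  rw [← prod_filter_mul_prod_filter_not (X ∪ Y).powerset (fun C => C ⊆ X ∨ C ⊆ Y), hpure, hunion]
  simp only [not_or]

namespace ClusterExpansion

open MvPowerSeries

variable {B R : Type*} [CommRing R]

def nonCrossing (X Y : Finset B) : Set (Sym2 B) := {e | ¬ ∃ i ∈ X, ∃ j ∈ Y, e = s(i, j)}

theorem coe_sym2_union_subset_nonCrossing {X Y : Finset B} (h : Disjoint X Y) :
    ↑X.sym2 ∪ ↑Y.sym2 ⊆ nonCrossing X Y := by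
  rintro e he ⟨i, hi, j, hj, rfl⟩
  simp only [Set.mem_union, Finset.mem_coe, Finset.mk_mem_sym2_iff] at he
  rcases he with ⟨-, hj'⟩ | ⟨hi', -⟩
  exacts [Finset.disjoint_left.mp h hj' hj, Finset.disjoint_left.mp h hi hi']

theorem restrictVars_nonCrossing_eq_C [DecidableEq B] {f : MvPowerSeries (Sym2 B) R}
    {C X Y : Finset B}
    (hf : ∀ d, d ≠ 0 → coeff d f ≠ 0 →
      ((SimpleGraph.fromEdgeSet ↑d.support).induce (↑C : Set B)).Connected)
    (hC : C ⊆ X ∪ Y) (hCX : ¬ C ⊆ X) (hCY : ¬ C ⊆ Y) :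
    restrictVars (nonCrossing X Y) f = MvPowerSeries.C (constantCoeff f) := by
  refine restrictVars_eq_C fun d hd hdE => by_contra fun hdf => ?_
  obtain ⟨a, haC, haY⟩ := Finset.not_subset.mp hCY
  obtain ⟨b, hbC, hbX⟩ := Finset.not_subset.mp hCX
  have haX : a ∈ X := (Finset.mem_union.mp (hC haC)).resolve_right haY
  obtain ⟨i, ⟨-, hi⟩, j, ⟨hjC, hjX⟩, hij⟩ :=
    (hf d hd hdf).exists_adj_inter_diff (X := ↑X) ⟨haC, haX⟩ ⟨hbC, hbX⟩
  exact hdE ((SimpleGraph.fromEdgeSet_adj _).mp hij).1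
    ⟨i, hi, j, (Finset.mem_union.mp (hC hjC)).resolve_left hjX, rfl⟩

variable {L Lt : Finset B → MvPowerSeries (Sym2 B) R}

theorem factor_empty (hconst : ∀ S, constantCoeff (L S) = 1)
    (hvars : ∀ S, restrictVars ↑S.sym2 (L S) = L S)
    (hrec : ∀ S, L S = ∏ C ∈ S.powerset, Lt C) : Lt ∅ = 1 := by
  have hLt : Lt ∅ = L ∅ := by rw [hrec, Finset.powerset_empty, Finset.prod_singleton]
  rw [hLt, ← hvars, Finset.sym2_empty, Finset.coe_empty, restrictVars_eq_C, hconst, map_one]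
  intro d hd hE
  simp [Set.subset_empty_iff, hd] at hE

theorem prod_restrictVars_mixed_factor_eq_one [DecidableEq B]
    (hconst : ∀ S, constantCoeff (L S) = 1)
    (hvars : ∀ S, restrictVars ↑S.sym2 (L S) = L S)
    (hfact : ∀ X Y, Disjoint X Y →
      restrictVars (nonCrossing X Y) (L (X ∪ Y)) = restrictVars (nonCrossing X Y) (L X * L Y))
    (hrec : ∀ S, L S = ∏ C ∈ S.powerset, Lt C) {X Y : Finset B} (hXY : Disjoint X Y) :
    ∏ C ∈ (X ∪ Y).powerset with ¬ C ⊆ X ∧ ¬ C ⊆ Y, restrictVars (nonCrossing X Y) (Lt C) = 1 := by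
  have hfix : ∀ Z, Z ⊆ X ∨ Z ⊆ Y → restrictVars (nonCrossing X Y) (L Z) = L Z := by
    intro Z hZ
    refine restrictVars_eq_self_of_subset (subset_trans ?_
      (coe_sym2_union_subset_nonCrossing hXY)) (hvars Z)
    rcases hZ with hZ | hZ
    · exact Set.subset_union_of_subset_left (Finset.coe_subset.mpr (Finset.sym2_mono hZ)) _
    · exact Set.subset_union_of_subset_right (Finset.coe_subset.mpr (Finset.sym2_mono hZ)) _
  have hXYunit : IsUnit (L X * L Y) :=
    isUnit_iff_constantCoeff.mpr (by simp [hconst])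
  refine hXYunit.mul_left_cancel ?_
  calc L X * L Y * ∏ C ∈ (X ∪ Y).powerset with ¬ C ⊆ X ∧ ¬ C ⊆ Y,
        restrictVars (nonCrossing X Y) (Lt C)
      = restrictVars (nonCrossing X Y) (L (X ∪ Y)) := by
        rw [hrec (X ∪ Y),
          Finset.prod_powerset_union_of_disjoint (factor_empty hconst hvars hrec) hXY, ← hrec X,
          ← hrec Y, map_mul, map_prod, map_mul, hfix X (.inl subset_rfl), hfix Y (.inr subset_rfl)]
    _ = L X * L Y * 1 := by
        rw [hfact X Y hXY, map_mul, hfix X (.inl subset_rfl), hfix Y (.inr subset_rfl), mul_one]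

theorem induce_connected_of_coeff_factor_ne_zero [DecidableEq B]
    (hconst : ∀ S, constantCoeff (L S) = 1)
    (hvars : ∀ S, restrictVars ↑S.sym2 (L S) = L S)
    (hfact : ∀ X Y, Disjoint X Y →
      restrictVars (nonCrossing X Y) (L (X ∪ Y)) = restrictVars (nonCrossing X Y) (L X * L Y))
    (hrec : ∀ S, L S = ∏ C ∈ S.powerset, Lt C) (S : Finset B) :
    ∀ d, d ≠ 0 → coeff d (Lt S) ≠ 0 →
      ((SimpleGraph.fromEdgeSet ↑d.support).induce (↑S : Set B)).Connected := by
  induction S using Finset.strongInduction with | H S ih =>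
  intro d hd hdS
  by_contra hconn
  obtain rfl | hS := S.eq_empty_or_nonempty
  · rw [factor_empty hconst hvars hrec, coeff_one, if_neg hd] at hdS
    exact hdS rfl
  obtain ⟨X, Y, hXY, rfl, hX, hY, hcut⟩ :=
    SimpleGraph.exists_partition_of_not_connected_induce hS hconn
  have hdE : ↑d.support ⊆ nonCrossing X Y := by
    rintro e he ⟨i, hi, j, hj, rfl⟩
    exact hcut i hi j hj ((SimpleGraph.fromEdgeSet_adj _).mpr
      ⟨he, fun hij => Finset.disjoint_left.mp hXY hi (hij ▸ hj)⟩)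
  set M := {C ∈ (X ∪ Y).powerset | ¬ C ⊆ X ∧ ¬ C ⊆ Y}
  have hSM : X ∪ Y ∈ M := by
    obtain ⟨x, hx⟩ := hX
    obtain ⟨y, hy⟩ := hY
    refine Finset.mem_filter.mpr ⟨Finset.mem_powerset_self _, fun h => ?_, fun h => ?_⟩
    · exact Finset.disjoint_left.mp hXY (h (Finset.mem_union_right _ hy)) hy
    · exact Finset.disjoint_left.mp hXY hx (h (Finset.mem_union_left _ hx))
  have hconstant : ∀ C ∈ M.erase (X ∪ Y),
      restrictVars (nonCrossing X Y) (Lt C) = MvPowerSeries.C (constantCoeff (Lt C)) := by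
    intro C hC
    obtain ⟨hCS, hC⟩ := Finset.mem_erase.mp hC
    obtain ⟨hC, hCX, hCY⟩ := Finset.mem_filter.mp hC
    have hC : C ⊆ X ∪ Y := Finset.mem_powerset.mp hC
    exact restrictVars_nonCrossing_eq_C (ih C (Finset.ssubset_iff_subset_ne.mpr ⟨hC, hCS⟩))
      hC hCX hCY
  have hprod := prod_restrictVars_mixed_factor_eq_one hconst hvars hfact hrec hXY
  rw [← Finset.mul_prod_erase _ _ hSM, Finset.prod_congr rfl hconstant, ← map_prod] at hprod
  have hcoeff := coeff_eq_zero_of_mul_C_eq_one hprod hd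
  rw [coeff_restrictVars, if_pos hdE] at hcoeff
  exact hdS hcoeff

end ClusterExpansion

/-- Connectivity lemma for the cluster correlation expansion: if each `L S` is a formal
power series in the pair variables `b_{ij}` with constant term `1`, depending only on
variables inside `S`, and `L` is factorable under disconnected interactions (setting all
cross variables between disjoint `X` and `Y` to zero makes `L (X ∪ Y)` specialize to
`L X * L Y`), then every non-constant monomial appearing in `Lt S` (where
`L S = ∏_{C ⊆ S} Lt C`) has an edge set connecting all of `S`: the graph on vertex set `S`
whose edges are the pairs occurring in the monomial is connected and spans `S`. -/
theorem cce_connected_monomials {B : Type*} [DecidableEq B]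
    (L Lt : Finset B → MvPowerSeries (Sym2 B) ℂ)
    (hconst : ∀ S, MvPowerSeries.constantCoeff (σ := Sym2 B) (R := ℂ) (L S) = 1)
    (hvars : ∀ (S : Finset B) (d : Sym2 B →₀ ℕ),
      MvPowerSeries.coeff (R := ℂ) d (L S) ≠ 0 → ∀ e ∈ d.support, ∀ i ∈ e, i ∈ S)
    (hfact : ∀ X Y : Finset B, Disjoint X Y →
      ∀ d : Sym2 B →₀ ℕ,
        (∀ e ∈ d.support, ¬ ∃ i ∈ X, ∃ j ∈ Y, e = s(i, j)) →
        MvPowerSeries.coeff (R := ℂ) d (L (X ∪ Y)) = MvPowerSeries.coeff (R := ℂ) d (L X * L Y))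
    (hrec : ∀ S, L S = ∏ C ∈ S.powerset, Lt C) :
    ∀ (S : Finset B) (d : Sym2 B →₀ ℕ), d ≠ 0 →
      MvPowerSeries.coeff (R := ℂ) d (Lt S) ≠ 0 →
      ((SimpleGraph.fromEdgeSet (↑d.support : Set (Sym2 B))).induce (↑S : Set B)).Connected := by
  have hvars' : ∀ S, MvPowerSeries.restrictVars ↑S.sym2 (L S) = L S := fun S =>
    MvPowerSeries.restrictVars_eq_self_iff.mpr fun d hd _ he =>
      Finset.mem_sym2_iff.mpr (hvars S d hd _ he)
  have hfact' : ∀ X Y, Disjoint X Y →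
      MvPowerSeries.restrictVars (ClusterExpansion.nonCrossing X Y) (L (X ∪ Y)) =
        MvPowerSeries.restrictVars (ClusterExpansion.nonCrossing X Y) (L X * L Y) :=
    fun X Y hXY => MvPowerSeries.restrictVars_congr fun d hd => hfact X Y hXY d fun _ he => hd he
  exact ClusterExpansion.induce_connected_of_coeff_factor_ne_zero hconst hvars' hfact' hrec
end

section
/- Under the hypotheses of the connectivity lemma (L factorable under disconnected interactions, power series with constant term 1), the cluster correlation term tilde-L(S) for |S| = k equals a constant plus terms of total degree at least k-1 in the variables b_{ij}. -/
/-!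
Setting to zero the variables `b_{ij}` with `i ∈ X`, `j ∈ Y` is a ring homomorphism `π`. By
factorability `π (L (X ∪ Y)) = π (L X) * π (L Y)`; expanding both sides through
`L S = ∏ C ⊆ S, Lt C`, the clusters meeting both `X` and `Y` other than `X ∪ Y` contribute `1` by
induction on `|S|`, and cancelling the unit `π (L X) * π (L Y)` leaves `π (Lt (X ∪ Y)) = 1`.
So `Lt S` has no nonconstant monomial avoiding all edges between the parts of a partition of `S`
into two nonempty sets. A monomial of degree `< |S| - 1` involves fewer than `|S| - 1` edges, so
the graph it spans on `S` is disconnected and one of its components provides such a partition.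
-/

open MvPowerSeries Finset

theorem MvPowerSeries.killCompl_eq_killCompl_iff {σ τ R : Type*} [CommSemiring R] {e : σ ↪ τ}
    {p q : MvPowerSeries τ R} :
    killCompl e p = killCompl e q ↔
      ∀ x : τ →₀ ℕ, ↑x.support ⊆ Set.range e → coeff x p = coeff x q := by
  refine ⟨fun h x hx => ?_, fun h => ext fun y => ?_⟩
  · obtain ⟨y, rfl⟩ := (Finsupp.mem_range_embDomain_iff e x).mpr hx
    simpa only [coeff_killCompl] using congr(coeff y $h)
  · simpa only [coeff_killCompl] using h _ ((Finsupp.mem_range_embDomain_iff e _).mp ⟨y, rfl⟩)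

theorem Finsupp.card_support_le_sum_self {α : Type*} (d : α →₀ ℕ) :
    d.support.card ≤ d.sum fun _ n => n := by
  simpa [Finsupp.sum] using
    card_nsmul_le_sum d.support d 1 fun _ h => Nat.one_le_iff_ne_zero.mpr (mem_support_iff.mp h)

theorem Finset.prod_powerset_union_mul_of_disjoint {α M : Type*} [DecidableEq α] [CommMonoid M]
    {X Y : Finset α} (hXY : Disjoint X Y) (hX : X.Nonempty) (hY : Y.Nonempty)
    (g : Finset α → M) (hg : ∀ C ⊂ X ∪ Y, ¬ C ⊆ X → ¬ C ⊆ Y → g C = 1) :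
    (∏ C ∈ (X ∪ Y).powerset, g C) * g ∅ =
      (∏ C ∈ X.powerset, g C) * (∏ C ∈ Y.powerset, g C) * g (X ∪ Y) := by
  have h_inside :
      (X ∪ Y).powerset.filter (fun C => C ⊆ X ∨ C ⊆ Y) = X.powerset ∪ Y.powerset := by
    ext C
    simp only [mem_filter, mem_powerset, mem_union]
    exact ⟨And.right, fun h => ⟨h.elim (·.trans subset_union_left) (·.trans subset_union_right), h⟩⟩
  have h_across :
      ∏ C ∈ (X ∪ Y).powerset.filter (fun C => ¬ (C ⊆ X ∨ C ⊆ Y)), g C = g (X ∪ Y) := by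
    refine prod_eq_single_of_mem _ ?_ fun C hC hne => ?_
    · simp only [mem_filter, mem_powerset, not_or]
      refine ⟨subset_rfl, fun h => hY.ne_empty ?_, fun h => hX.ne_empty ?_⟩
      · exact disjoint_self_iff_empty _ |>.mp (hXY.mono_left (subset_union_right.trans h))
      · exact disjoint_self_iff_empty _ |>.mp (hXY.mono_right (subset_union_left.trans h))
    · simp only [mem_filter, mem_powerset, not_or] at hC
      exact hg C (ssubset_iff_subset_ne.mpr ⟨hC.1, hne⟩) hC.2.1 hC.2.2
  have h_overlap : X.powerset ∩ Y.powerset = {∅} := by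
    ext C
    simp only [mem_inter, mem_powerset, mem_singleton, ← subset_inter_iff,
      disjoint_iff_inter_eq_empty.mp hXY, subset_empty]
  rw [← prod_filter_mul_prod_filter_not _ (fun C => C ⊆ X ∨ C ⊆ Y), h_inside, h_across,
    mul_right_comm, ← prod_union_inter, h_overlap, prod_singleton, mul_right_comm]

namespace ClusterExpansion

variable {B : Type*}

def crossEdges (X Y : Finset B) : Set (Sym2 B) := {e | ∃ i ∈ X, ∃ j ∈ Y, e = s(i, j)}

theorem exists_partition_forall_notMem_crossEdges [DecidableEq B] {S : Finset B}
    {E : Finset (Sym2 B)} (hE : E.card + 1 < S.card) :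
    ∃ X Y : Finset B, Disjoint X Y ∧ X ∪ Y = S ∧ X.Nonempty ∧ Y.Nonempty ∧
      ∀ e ∈ E, e ∉ crossEdges X Y := by
  classical
  set G := (SimpleGraph.fromEdgeSet (E : Set (Sym2 B))).induce (S : Set B)
  have h_edges : Nat.card G.edgeSet ≤ E.card :=
    calc Nat.card G.edgeSet
        ≤ Nat.card (SimpleGraph.fromEdgeSet (E : Set (Sym2 B))).edgeSet :=
          Nat.card_le_card_of_injective _ (SimpleGraph.Embedding.induce _).mapEdgeSet.injective
      _ ≤ Nat.card (E : Set (Sym2 B)) := by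
          rw [SimpleGraph.edgeSet_fromEdgeSet]
          exact Nat.card_mono E.finite_toSet Set.sdiff_subset
      _ = E.card := by rw [Nat.card_coe_set_eq, Set.ncard_coe_finset]
  have h_disconnected : ¬ G.Connected := fun h => by
    have := h.card_vert_le_card_edgeSet_add_one
    rw [Nat.card_coe_set_eq, Set.ncard_coe_finset] at this
    omega
  obtain ⟨u, hu⟩ : S.Nonempty := card_pos.mp (by omega)
  obtain ⟨v, huv⟩ : ∃ v, ¬ G.Reachable ⟨u, hu⟩ v := by
    contrapose! h_disconnected
    exact G.connected_iff_exists_forall_reachable.mpr ⟨_, h_disconnected⟩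
  set p : B → Prop := fun w => ∃ hw : w ∈ S, G.Reachable ⟨u, hu⟩ ⟨w, hw⟩
  refine ⟨S.filter p, S.filter (¬ p ·), disjoint_filter_filter_not _ _ _,
    filter_union_filter_not_eq _ _, ⟨u, mem_filter.mpr ⟨hu, hu, .rfl⟩⟩,
    ⟨v, mem_filter.mpr ⟨v.2, fun ⟨_, h⟩ => huv h⟩⟩, ?_⟩
  rintro e he ⟨i, hi, j, hj, rfl⟩
  obtain ⟨-, hiS, h_reach_i⟩ := mem_filter.mp hi
  obtain ⟨hjS, h_not_reach_j⟩ := mem_filter.mp hj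
  have hij : i ≠ j := by rintro rfl; exact h_not_reach_j ⟨hiS, h_reach_i⟩
  have h_adj : G.Adj ⟨i, hiS⟩ ⟨j, hjS⟩ := ⟨he, hij⟩
  exact h_not_reach_j ⟨hjS, h_reach_i.trans h_adj.reachable⟩

noncomputable def killCross (R : Type*) [CommSemiring R] (X Y : Finset B) :
    MvPowerSeries (Sym2 B) R →ₐ[R] MvPowerSeries {e // e ∉ crossEdges X Y} R :=
  killCompl (Function.Embedding.subtype _)

section killCross

variable {R : Type*} [CommSemiring R] {X Y : Finset B}

theorem killCross_eq_killCross_iff {p q : MvPowerSeries (Sym2 B) R} :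
    killCross R X Y p = killCross R X Y q ↔
      ∀ d : Sym2 B →₀ ℕ, (∀ e ∈ d.support, e ∉ crossEdges X Y) → coeff d p = coeff d q := by
  simp [killCross, killCompl_eq_killCompl_iff, Set.subset_def]

theorem killCross_eq_killCross_of_subset {X' Y' : Finset B} (hX : X' ⊆ X) (hY : Y' ⊆ Y)
    {p q : MvPowerSeries (Sym2 B) R} (h : killCross R X' Y' p = killCross R X' Y' q) :
    killCross R X Y p = killCross R X Y q := by
  rw [killCross_eq_killCross_iff] at h ⊢
  exact fun d hd => h d fun e he ⟨i, hi, j, hj, hij⟩ => hd e he ⟨i, hX hi, j, hY hj, hij⟩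

end killCross

section Factorable

variable [DecidableEq B] {R : Type*}

def FactorsOnDisconnected [CommSemiring R] (L : Finset B → MvPowerSeries (Sym2 B) R) : Prop :=
  ∀ X Y, Disjoint X Y → killCross R X Y (L (X ∪ Y)) = killCross R X Y (L X * L Y)

variable [CommRing R] {L Lt : Finset B → MvPowerSeries (Sym2 B) R}

theorem clusterTerm_empty (hconst : ∀ S, constantCoeff (L S) = 1)
    (hfact : FactorsOnDisconnected L) (hrec : ∀ S, L S = ∏ C ∈ S.powerset, Lt C) :
    Lt ∅ = 1 := by
  have h_unit : IsUnit (L ∅) := isUnit_iff_constantCoeff.mpr (by rw [hconst]; exact isUnit_one)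
  have h_idem : IsIdempotentElem (L ∅) := by
    have h := killCross_eq_killCross_iff.mp (hfact ∅ ∅ (disjoint_empty_left _))
    exact ext fun d => (h d fun e _ ⟨i, hi, _⟩ => notMem_empty i hi).symm
  have h_L_empty : L ∅ = Lt ∅ := by rw [hrec, powerset_empty, prod_singleton]
  rw [← h_L_empty, ← IsIdempotentElem.iff_eq_one_of_isUnit h_unit]
  exact h_idem

theorem killCross_clusterTerm_eq_one (hconst : ∀ S, constantCoeff (L S) = 1)
    (hfact : FactorsOnDisconnected L) (hrec : ∀ S, L S = ∏ C ∈ S.powerset, Lt C)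
    {X Y : Finset B} (hXY : Disjoint X Y) (hX : X.Nonempty) (hY : Y.Nonempty) :
    killCross R X Y (Lt (X ∪ Y)) = 1 := by
  induction hS : X ∪ Y using Finset.strongInduction generalizing X Y with | H S ih =>
  subst hS
  set π := killCross R X Y
  have h_across : ∀ C ⊂ X ∪ Y, ¬ C ⊆ X → ¬ C ⊆ Y → π (Lt C) = 1 := by
    intro C hC hCX hCY
    have hC_eq : C ∩ X ∪ C ∩ Y = C := by
      rw [← inter_union_distrib_left, inter_eq_left.mpr hC.subset]
    obtain ⟨a, haC, haY⟩ := not_subset.mp hCY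
    obtain ⟨b, hbC, hbX⟩ := not_subset.mp hCX
    have h := ih C hC (hXY.mono inter_subset_right inter_subset_right)
      ⟨a, mem_inter.mpr ⟨haC, (mem_union.mp (hC.subset haC)).resolve_right haY⟩⟩
      ⟨b, mem_inter.mpr ⟨hbC, (mem_union.mp (hC.subset hbC)).resolve_left hbX⟩⟩ hC_eq
    rw [← map_one (killCross R (C ∩ X) (C ∩ Y))] at h
    rw [← map_one π]
    exact killCross_eq_killCross_of_subset inter_subset_right inter_subset_right h
  have h_split : π (L X) * π (L Y) * π (Lt (X ∪ Y)) = π (L X) * π (L Y) :=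
    calc _ = π (L (X ∪ Y)) * π (Lt ∅) := by
          rw [hrec X, hrec Y, hrec (X ∪ Y), map_prod, map_prod, map_prod,
            prod_powerset_union_mul_of_disjoint hXY hX hY _ h_across]
      _ = π (L X) * π (L Y) := by
          rw [clusterTerm_empty hconst hfact hrec, map_one, mul_one, ← map_mul, hfact X Y hXY]
  have h_unit : IsUnit (π (L X) * π (L Y)) := by
    rw [← map_mul]
    exact (isUnit_iff_constantCoeff.mpr (by simp [hconst])).map π
  exact h_unit.mul_eq_left.mp h_split

end Factorable

end ClusterExpansion

theorem cce_degree_bound_general {B : Type*} [DecidableEq B]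
    (L Lt : Finset B → MvPowerSeries (Sym2 B) ℂ)
    (hconst : ∀ S, MvPowerSeries.constantCoeff (L S) = 1)
    (hfact : ∀ X Y : Finset B, Disjoint X Y →
      ∀ d : Sym2 B →₀ ℕ,
        (∀ e ∈ d.support, ¬ ∃ i ∈ X, ∃ j ∈ Y, e = s(i, j)) →
        MvPowerSeries.coeff d (L (X ∪ Y)) = MvPowerSeries.coeff d (L X * L Y))
    (hrec : ∀ S, L S = ∏ C ∈ S.powerset, Lt C) :
    ∀ (S : Finset B) (d : Sym2 B →₀ ℕ), d ≠ 0 →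
      (d.sum fun _ n => n) < S.card - 1 →
      MvPowerSeries.coeff d (Lt S) = 0 := by
  intro S d hd hdeg
  obtain ⟨X, Y, hXY, rfl, hX, hY, h_cross⟩ :=
    ClusterExpansion.exists_partition_forall_notMem_crossEdges (S := S) (E := d.support)
      (by have := d.card_support_le_sum_self; omega)
  have h_one := ClusterExpansion.killCross_clusterTerm_eq_one hconst
    (fun X Y hXY => ClusterExpansion.killCross_eq_killCross_iff.mpr (hfact X Y hXY)) hrec
    hXY hX hY
  rw [← map_one (ClusterExpansion.killCross ℂ X Y),
    ClusterExpansion.killCross_eq_killCross_iff] at h_one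
  rw [h_one d h_cross, coeff_one, if_neg hd]

/-- Degree bound for cluster correlation terms: under the hypotheses of the connectivity
lemma (power series with constant term `1`, variables confined to the cluster, factorable
under disconnected interactions), the cluster correlation term `Lt S` for `|S| = k` equals
a constant plus terms of total degree at least `k - 1` in the pair variables `b_{ij}`:
every nonzero monomial of total degree `< k - 1` has vanishing coefficient. -/
theorem cce_degree_bound {B : Type*} [DecidableEq B]
    (L Lt : Finset B → MvPowerSeries (Sym2 B) ℂ)
    (hconst : ∀ S, MvPowerSeries.constantCoeff (L S) = 1)
    (hvars : ∀ (S : Finset B) (d : Sym2 B →₀ ℕ),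
      MvPowerSeries.coeff d (L S) ≠ 0 → ∀ e ∈ d.support, ∀ i ∈ e, i ∈ S)
    (hfact : ∀ X Y : Finset B, Disjoint X Y →
      ∀ d : Sym2 B →₀ ℕ,
        (∀ e ∈ d.support, ¬ ∃ i ∈ X, ∃ j ∈ Y, e = s(i, j)) →
        MvPowerSeries.coeff d (L (X ∪ Y)) = MvPowerSeries.coeff d (L X * L Y))
    (hrec : ∀ S, L S = ∏ C ∈ S.powerset, Lt C) :
    ∀ (S : Finset B) (d : Sym2 B →₀ ℕ), d ≠ 0 →
      (d.sum fun _ n => n) < S.card - 1 →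
      MvPowerSeries.coeff d (Lt S) = 0 :=
  cce_degree_bound_general L Lt hconst hfact hrec
end
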